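/- If A and B are admissible linear chains with e(A) + e(B) = 1, then also e(A^T) + e(B^T) = 1, where A^T denotes the reversed chain. -/

import Mathlib

/-- The tridiagonal matrix of a linear chain: diagonal entries from the list,
entries `-1` on the first sub- and super-diagonals, `0` elsewhere. -/
def chainMatrix (l : List ℤ) : Matrix (Fin l.length) (Fin l.length) ℤ :=
  fun i j =>
    if i = j then l.get i
    else if (i : ℕ) + 1 = (j : ℕ) ∨ (j : ℕ) + 1 = (i : ℕ) then -1 else 0

/-- The discriminant of a linear chain. -/
def disc (l : List ℤ) : ℤ := (chainMatrix l).det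

/-- A linear chain is admissible if it is nonempty and all entries are ≥ 2. -/
def Admissible (l : List ℤ) : Prop := l ≠ [] ∧ ∀ a ∈ l, 2 ≤ a

/-- The inductance of a chain. -/
def ind (l : List ℤ) : ℚ := (disc l.tail : ℚ) / (disc l : ℚ)

/-!
Write `n = d(A)`, `α = d(Ā)` and `α' = d(A')`, where `A'` drops the last entry of `A`.
A Cassini-type identity for continuants gives `α α' ≡ 1 (mod n)`, so `α / n` is in lowest terms,
and `e(A) + e(B) = 1` forces `d(A) = d(B) = n` and `α + β = n`. Then `α'` and `β'` are inverses
of `α` and `β ≡ -α` modulo `n`, whence `n ∣ α' + β'`; as `0 < α', β' < n`, `α' + β' = n`.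
Since `d` is invariant under reversal, `e(Aᵀ) = α' / n`.
-/

section chainMatrix

variable {l : List ℤ}

lemma chainMatrix_apply_of_adj {i j : Fin l.length} (h : (i : ℕ) + 1 = j ∨ (j : ℕ) + 1 = i) :
    chainMatrix l i j = -1 := by
  rw [chainMatrix, if_neg (by rintro rfl; omega), if_pos h]

lemma chainMatrix_apply_of_far {i j : Fin l.length} (h : (i : ℕ) + 1 < j ∨ (j : ℕ) + 1 < i) :
    chainMatrix l i j = 0 := by
  rw [chainMatrix, if_neg (by rintro rfl; omega), if_neg (by omega)]

lemma chainMatrix_cons_succ_succ (a : ℤ) (i j : Fin l.length) :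
    chainMatrix (a :: l) i.succ j.succ = chainMatrix l i j := by
  simp only [chainMatrix, Fin.succ_inj, Fin.val_succ, add_left_inj, List.get_eq_getElem,
    List.getElem_cons_succ]

lemma chainMatrix_cons_zero_zero (a : ℤ) :
    chainMatrix (a :: l) 0 0 = a := if_pos rfl

end chainMatrix

lemma disc_nil : disc [] = 1 := Matrix.det_fin_zero

lemma disc_singleton (a : ℤ) : disc [a] = a := by
  simp [disc, chainMatrix]

lemma disc_cons_cons (a b : ℤ) (m : List ℤ) :
    disc (a :: b :: m) = a * disc (b :: m) - disc m := by
  let M : Matrix (Fin (m.length + 1 + 1)) (Fin (m.length + 1 + 1)) ℤ := chainMatrix (a :: b :: m)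
  have hM : ∀ i j, M i j = chainMatrix (a :: b :: m) i j := fun _ _ => rfl
  have hM₀ : M.submatrix Fin.succ Fin.succ = chainMatrix (b :: m) := by
    ext i j; exact chainMatrix_cons_succ_succ (l := b :: m) a i j
  have hM₁ : (M.submatrix (Fin.succAbove 1) Fin.succ).det = -disc m := by
    have hminor : (M.submatrix (Fin.succAbove 1) Fin.succ).submatrix Fin.succ Fin.succ =
        chainMatrix m := by
      ext i j
      rw [Matrix.submatrix_apply, Matrix.submatrix_apply, Fin.one_succAbove_succ, hM,
        chainMatrix_cons_succ_succ, chainMatrix_cons_succ_succ]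
    rw [Matrix.det_succ_row_zero, Fin.sum_univ_succ, Finset.sum_eq_zero]
    · rw [Fin.succAbove_zero, hminor, Matrix.submatrix_apply, Fin.one_succAbove_zero, hM,
        chainMatrix_apply_of_adj (by simp)]
      simp [disc]
    · intro j _
      rw [Matrix.submatrix_apply, Fin.one_succAbove_zero, hM, chainMatrix_apply_of_far (by simp),
        mul_zero, zero_mul]
  change M.det = _
  rw [Matrix.det_succ_column_zero, Fin.sum_univ_succ, Fin.sum_univ_succ, Finset.sum_eq_zero]
  · rw [Fin.succAbove_zero, hM₀, Fin.succ_zero_eq_one, hM₁, hM, hM,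
      chainMatrix_cons_zero_zero, chainMatrix_apply_of_adj (by simp)]
    simp only [Fin.val_zero, Fin.val_one, pow_zero, pow_one, disc, add_zero]
    ring
  · intro i _
    rw [hM, chainMatrix_apply_of_far (by simp), mul_zero, zero_mul]

lemma disc_reverse (l : List ℤ) : disc l.reverse = disc l := by
  let e : Fin l.reverse.length ≃ Fin l.length := (finCongr l.length_reverse).trans Fin.revPerm
  have he : ∀ i, (e i : ℕ) = l.length - 1 - i := fun i => by simp [e]; omega
  suffices chainMatrix l.reverse = (chainMatrix l).submatrix e e by
    rw [disc, this, Matrix.det_submatrix_equiv_self, disc]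
  ext i j
  have hi := i.isLt
  have hj := j.isLt
  simp only [List.length_reverse] at hi hj
  simp only [chainMatrix, Matrix.submatrix_apply, Fin.ext_iff, he, List.get_eq_getElem,
    List.getElem_reverse]
  split_ifs <;> first | rfl | omega

lemma disc_reverse_tail (l : List ℤ) : disc l.reverse.tail = disc l.dropLast := by
  rw [List.tail_reverse, disc_reverse]

lemma ind_reverse (l : List ℤ) : ind l.reverse = disc l.dropLast / disc l := by
  rw [ind, disc_reverse_tail, disc_reverse]

lemma disc_pos_and_lt_disc_cons {a : ℤ} {t : List ℤ} (h : ∀ x ∈ a :: t, 2 ≤ x) :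
    0 < disc t ∧ disc t < disc (a :: t) := by
  have ha := h a List.mem_cons_self
  induction t generalizing a with
  | nil =>
    rw [disc_nil, disc_singleton]
    omega
  | cons b m ih =>
    obtain ⟨hm, hbm⟩ := ih (fun x hx => h x (List.mem_cons_of_mem a hx)) (h b (by simp))
    rw [disc_cons_cons]
    constructor <;> nlinarith

lemma disc_pos {l : List ℤ} (hl : ∀ x ∈ l, 2 ≤ x) : 0 < disc l := by
  cases l with
  | nil => rw [disc_nil]; exact one_pos
  | cons a t =>
    obtain ⟨ht, hlt⟩ := disc_pos_and_lt_disc_cons hl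
    exact ht.trans hlt

lemma disc_tail_lt_disc {l : List ℤ} (hl : ∀ x ∈ l, 2 ≤ x) (hne : l ≠ []) :
    disc l.tail < disc l := by
  obtain ⟨a, t, rfl⟩ := List.exists_cons_of_ne_nil hne
  exact (disc_pos_and_lt_disc_cons hl).2

lemma disc_dropLast_lt_disc {l : List ℤ} (hl : ∀ x ∈ l, 2 ≤ x) (hne : l ≠ []) :
    disc l.dropLast < disc l := by
  simpa only [disc_reverse_tail, disc_reverse] using
    disc_tail_lt_disc (l := l.reverse) (fun x hx => hl x (List.mem_reverse.mp hx))
      (List.reverse_ne_nil_iff.mpr hne)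

/-- The continuant analogue of Cassini's identity. -/
lemma disc_tail_mul_disc_dropLast_sub (a b : ℤ) (m : List ℤ) :
    disc (b :: m) * disc (a :: b :: m).dropLast - disc (a :: b :: m) * disc (b :: m).dropLast
      = 1 := by
  induction m generalizing a b with
  | nil =>
    change disc [b] * disc [a] - disc [a, b] * disc [] = 1
    rw [disc_cons_cons, disc_singleton, disc_singleton, disc_nil]
    ring
  | cons c m ih =>
    have hdrop : (b :: c :: m).dropLast = b :: (c :: m).dropLast := rfl
    have ih' := ih b c
    rw [hdrop] at ih'
    rw [List.dropLast_cons_of_ne_nil (by simp), hdrop, disc_cons_cons a b, disc_cons_cons a b]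
    linear_combination ih'

lemma disc_dvd_disc_tail_mul_disc_dropLast_sub_one {l : List ℤ} (hl : l ≠ []) :
    disc l ∣ disc l.tail * disc l.dropLast - 1 := by
  match l with
  | [a] => simp [disc_nil]
  | a :: b :: m =>
    refine ⟨disc (b :: m).dropLast, ?_⟩
    rw [List.tail_cons]
    linear_combination disc_tail_mul_disc_dropLast_sub a b m

lemma isCoprime_disc_tail_disc (l : List ℤ) : IsCoprime (disc l.tail) (disc l) := by
  rcases eq_or_ne l [] with rfl | hl
  · rw [List.tail_nil, disc_nil]
    exact isCoprime_one_left
  · obtain ⟨k, hk⟩ := disc_dvd_disc_tail_mul_disc_dropLast_sub_one hl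
    exact ⟨disc l.dropLast, -k, by linear_combination hk⟩

lemma eq_and_add_eq_of_div_add_div_eq_one {a b n m : ℤ} (ha : IsCoprime a n) (hb : IsCoprime b m)
    (hn : 0 < n) (hm : 0 < m) (h : (a / n + b / m : ℚ) = 1) : m = n ∧ a + b = n := by
  have hZ : a * m + n * b = n * m := by
    rw [div_add_div _ _ (by positivity) (by positivity), div_eq_one_iff_eq (by positivity)] at h
    exact_mod_cast h
  have hnm : n ∣ m := ha.symm.dvd_of_dvd_mul_left ⟨m - b, by linear_combination hZ⟩
  have hmn : m ∣ n := hb.symm.dvd_of_dvd_mul_left ⟨n - a, by linear_combination hZ⟩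
  obtain rfl : m = n := Int.dvd_antisymm hm.le hn.le hmn hnm
  exact ⟨rfl, mul_right_cancel₀ hn.ne' (by linear_combination hZ)⟩

lemma dvd_add_of_dvd_mul_sub_one {n a b a' b' : ℤ} (ha : n ∣ a * a' - 1) (hb : n ∣ b * b' - 1)
    (hab : n ∣ a + b) : n ∣ a' + b' := by
  have : a' + b' = a' * b' * (a + b) - a' * (b * b' - 1) - b' * (a * a' - 1) := by ring
  rw [this]
  exact ((hab.mul_left _).sub (hb.mul_left _)).sub (ha.mul_left _)

lemma add_eq_of_dvd_mul_sub_one {n a b a' b' : ℤ} (ha : n ∣ a * a' - 1) (hb : n ∣ b * b' - 1)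
    (hab : n ∣ a + b) (ha' : 0 < a') (hb' : 0 < b') (ha'n : a' < n) (hb'n : b' < n) :
    a' + b' = n := by
  obtain ⟨k, hk⟩ := dvd_add_of_dvd_mul_sub_one ha hb hab
  obtain rfl : k = 1 := by nlinarith
  rw [hk, mul_one]

theorem ind_reverse_add_eq_one (A B : List ℤ) (hA : Admissible A) (hB : Admissible B)
    (h : ind A + ind B = 1) : ind A.reverse + ind B.reverse = 1 := by
  obtain ⟨hA₀, hA₂⟩ := hA
  obtain ⟨hB₀, hB₂⟩ := hB
  have hA₂' : ∀ x ∈ A.dropLast, 2 ≤ x := fun x hx => hA₂ x (List.mem_of_mem_dropLast hx)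
  have hB₂' : ∀ x ∈ B.dropLast, 2 ≤ x := fun x hx => hB₂ x (List.mem_of_mem_dropLast hx)
  obtain ⟨hBA, htail⟩ := eq_and_add_eq_of_div_add_div_eq_one (isCoprime_disc_tail_disc A)
    (isCoprime_disc_tail_disc B) (disc_pos hA₂) (disc_pos hB₂) h
  have hdropLast : disc A.dropLast + disc B.dropLast = disc A :=
    add_eq_of_dvd_mul_sub_one (disc_dvd_disc_tail_mul_disc_dropLast_sub_one hA₀)
      (hBA ▸ disc_dvd_disc_tail_mul_disc_dropLast_sub_one hB₀) (htail ▸ dvd_rfl)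
      (disc_pos hA₂') (disc_pos hB₂') (disc_dropLast_lt_disc hA₂ hA₀)
      (hBA ▸ disc_dropLast_lt_disc hB₂ hB₀)
  rw [ind_reverse, ind_reverse, hBA, ← add_div, ← Int.cast_add, hdropLast,
    div_self (by exact_mod_cast (disc_pos hA₂).ne')]
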